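/- arXiv:1310.8424 — 2 statements merged into one kernel-verified Lean document; each statement's English description precedes it below -/
import Mathlib

section
/- Let V be a real vector space with a symmetric multilinear form deg on (d+1)-tuples, and suppose a 'Hodge index' property holds: for any elements D, E, H_2, ..., H_d of a cone N of 'nef' elements with all relevant intersection numbers positive, if deg(F, E, H_1, ..., H_{d-1}) = 0 for F = deg(E,E,H_2,...,H_d)·D − deg(D,E,H_2,...,H_d)·E then deg(F,F,H_2,...,H_d) ≤ 0. Then for all such D, E, H_2, ..., H_d one has deg(D,E,H_2,...,H_d)^2 ≥ deg(D,D,H_2,...,H_d)·deg(E,E,H_2,...,H_d). -/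
/-- The tuple `(D, E, H 0, ..., H (d-2))` of length `d+1`. -/
def tup {V : Type*} (d : ℕ) (D E : V) (H : Fin (d-1) → V) : Fin (d+1) → V :=
  fun i =>
    if h0 : (i : ℕ) = 0 then D
    else if h1 : (i : ℕ) = 1 then E
    else H ⟨(i : ℕ) - 2, by have := i.isLt; omega⟩

/-!
With `H` fixed, `(x, y) ↦ deg (x, y, H)` is a symmetric bilinear form `B`. For
`F = B(E,E) • D - B(D,E) • E` one has `B(F,E) = 0` and
`B(F,F) = B(E,E) · (B(D,D) B(E,E) - B(D,E)²)`, so, as `B(E,E) > 0`, the Hodge index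
inequality `B(F,F) ≤ 0` is equivalent to `B(D,D) B(E,E) ≤ B(D,E)²`.
-/

namespace LinearMap.BilinForm

variable {R M : Type*} [CommRing R] [AddCommGroup M] [Module R M] {B : LinearMap.BilinForm R M}

theorem apply_smul_sub_smul_left_eq_zero (B : LinearMap.BilinForm R M) (D E : M) :
    B (B E E • D - B D E • E) E = 0 := by
  simp only [map_sub, map_smul, LinearMap.sub_apply, LinearMap.smul_apply, smul_eq_mul]
  ring

theorem IsSymm.apply_smul_sub_smul_self (hB : B.IsSymm) (D E : M) :
    B (B E E • D - B D E • E) (B E E • D - B D E • E)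
      = B E E * (B D D * B E E - B D E ^ 2) := by
  simp only [map_sub, map_smul, LinearMap.sub_apply, LinearMap.smul_apply, smul_eq_mul,
    hB.eq E D]
  ring

theorem IsSymm.mul_le_sq_of_apply_smul_sub_smul_nonpos [LinearOrder R] [IsStrictOrderedRing R]
    (hB : B.IsSymm) {D E : M} (hE : 0 < B E E)
    (hF : B (B E E • D - B D E • E) (B E E • D - B D E • E) ≤ 0) :
    B D D * B E E ≤ B D E ^ 2 := by
  rw [hB.apply_smul_sub_smul_self] at hF
  exact sub_nonpos.mp (nonpos_of_mul_nonpos_right hF hE)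

end LinearMap.BilinForm

section TupForm

variable {V : Type*} {d : ℕ}

theorem tup_update_zero (D D' E : V) (H : Fin (d - 1) → V) :
    Function.update (tup d D E H) 0 D' = tup d D' E H := by
  funext i
  rcases eq_or_ne i 0 with rfl | hi
  · simp [tup]
  · simp [Function.update, hi, tup, Fin.val_ne_zero_iff.mpr hi]

theorem tup_update_one (hd : 1 ≤ d) (D E E' : V) (H : Fin (d - 1) → V) :
    Function.update (tup d D E H) 1 E' = tup d D E' H := by
  obtain ⟨n, rfl⟩ := Nat.exists_eq_add_of_le' hd
  funext i
  rcases eq_or_ne i 1 with rfl | hi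
  · simp [tup]
  · have hi' : (i : ℕ) ≠ 1 := fun h => hi (Fin.ext (by simp [h]))
    simp [Function.update, hi, tup, hi']

theorem tup_comp_swap (hd : 1 ≤ d) (D E : V) (H : Fin (d - 1) → V) :
    tup d E D H ∘ Equiv.swap 0 1 = tup d D E H := by
  obtain ⟨n, rfl⟩ := Nat.exists_eq_add_of_le' hd
  funext i
  rcases eq_or_ne i 0 with rfl | h0
  · simp [tup]
  rcases eq_or_ne i 1 with rfl | h1
  · simp [tup]
  · have hv1 : (i : ℕ) ≠ 1 := fun h => h1 (Fin.ext (by simp [h]))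
    simp [Equiv.swap_apply_of_ne_of_ne h0 h1, tup, Fin.val_ne_zero_iff.mpr h0, hv1]

variable {R : Type*} [CommSemiring R] [AddCommMonoid V] [Module R V]

def tupForm (hd : 1 ≤ d) (deg : MultilinearMap R (fun _ : Fin (d + 1) => V) R)
    (H : Fin (d - 1) → V) : LinearMap.BilinForm R V :=
  LinearMap.mk₂ R (fun x y => deg (tup d x y H))
    (fun x x' y => by
      simpa only [tup_update_zero] using deg.map_update_add (tup d x y H) 0 x x')
    (fun c x y => by
      simpa only [tup_update_zero] using deg.map_update_smul (tup d x y H) 0 c x)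
    (fun x y y' => by
      simpa only [tup_update_one hd] using deg.map_update_add (tup d x y H) 1 y y')
    (fun c x y => by
      simpa only [tup_update_one hd] using deg.map_update_smul (tup d x y H) 1 c y)

theorem tupForm_isSymm (hd : 1 ≤ d) (deg : MultilinearMap R (fun _ : Fin (d + 1) => V) R)
    (hsym : ∀ (σ : Equiv.Perm (Fin (d + 1))) (v : Fin (d + 1) → V), deg (v ∘ σ) = deg v)
    (H : Fin (d - 1) → V) : (tupForm hd deg H).IsSymm :=
  ⟨fun x y => by
    change deg (tup d x y H) = deg (tup d y x H)
    rw [← tup_comp_swap hd x y H, hsym]⟩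

end TupForm

theorem stmt_0_general {V : Type*} [AddCommGroup V] [Module ℝ V] (d : ℕ) (hd : 1 ≤ d)
    (deg : MultilinearMap ℝ (fun _ : Fin (d+1) => V) ℝ)
    (hsym : ∀ (σ : Equiv.Perm (Fin (d+1))) (v : Fin (d+1) → V), deg (v ∘ σ) = deg v)
    (N : Set V)
    (hodge : ∀ D ∈ N, ∀ E ∈ N, ∀ H : Fin (d-1) → V, (∀ i, H i ∈ N) →
      0 < deg (tup d D D H) → 0 < deg (tup d E E H) → 0 < deg (tup d D E H) →
      deg (tup d (deg (tup d E E H) • D - deg (tup d D E H) • E) E H) = 0 →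
      deg (tup d (deg (tup d E E H) • D - deg (tup d D E H) • E)
            (deg (tup d E E H) • D - deg (tup d D E H) • E) H) ≤ 0) :
    ∀ D ∈ N, ∀ E ∈ N, ∀ H : Fin (d-1) → V, (∀ i, H i ∈ N) →
      0 < deg (tup d D D H) → 0 < deg (tup d E E H) → 0 < deg (tup d D E H) →
      deg (tup d D E H) ^ 2 ≥ deg (tup d D D H) * deg (tup d E E H) := by
  intro D hD E hE H hH hDD hEE hDE
  let B := tupForm hd deg H
  have hFE : B (B E E • D - B D E • E) E = 0 := B.apply_smul_sub_smul_left_eq_zero D E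
  exact (tupForm_isSymm hd deg hsym H).mul_le_sq_of_apply_smul_sub_smul_nonpos hEE
    (hodge D hD E hE H hH hDD hEE hDE hFE)

theorem stmt_0 {V : Type*} [AddCommGroup V] [Module ℝ V] (d : ℕ) (hd : 1 ≤ d)
    (deg : MultilinearMap ℝ (fun _ : Fin (d+1) => V) ℝ)
    (hsym : ∀ (σ : Equiv.Perm (Fin (d+1))) (v : Fin (d+1) → V), deg (v ∘ σ) = deg v)
    (N : Set V)
    (hNadd : ∀ x ∈ N, ∀ y ∈ N, x + y ∈ N)
    (hNsmul : ∀ x ∈ N, ∀ c : ℝ, 0 ≤ c → c • x ∈ N)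
    (hodge : ∀ D ∈ N, ∀ E ∈ N, ∀ H : Fin (d-1) → V, (∀ i, H i ∈ N) →
      0 < deg (tup d D D H) → 0 < deg (tup d E E H) → 0 < deg (tup d D E H) →
      deg (tup d (deg (tup d E E H) • D - deg (tup d D E H) • E) E H) = 0 →
      deg (tup d (deg (tup d E E H) • D - deg (tup d D E H) • E)
            (deg (tup d E E H) • D - deg (tup d D E H) • E) H) ≤ 0) :
    ∀ D ∈ N, ∀ E ∈ N, ∀ H : Fin (d-1) → V, (∀ i, H i ∈ N) →
      0 < deg (tup d D D H) → 0 < deg (tup d E E H) → 0 < deg (tup d D E H) →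
      deg (tup d D E H) ^ 2 ≥ deg (tup d D D H) * deg (tup d E E H) :=
  stmt_0_general d hd deg hsym N hodge
end

section
/- Let d ≥ 1 and let a : {0,...,d+1} → ℝ_{>0} be a positive sequence that is log-concave (a(i)² ≥ a(i−1)·a(i+1) for 1 ≤ i ≤ d) and satisfies a(d)^{d+1} = a(d+1)^d · a(0) (equality at i = d of the interpolation bound, with A := a(d+1), B := a(0)). If moreover a(i)^{d+1} ≥ A^i · B^{d+1−i} for all i, then a(i)^{d+1} = A^i · B^{d+1−i} for every 0 ≤ i ≤ d+1. -/
/-! Put `c i = a i ^ (d + 1)` and `g i = a (d + 1) ^ i * a 0 ^ (d + 1 - i)`. The sequence `c` is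
log-concave and `g` is geometric, so `c i * g (i + 2) ≤ g (i + 1) ^ 2 = g i * g (i + 2)` as soon
as `c` agrees with `g` at `i + 1` and `i + 2`, i.e. `c i ≤ g i`. Together with `g ≤ c` this
propagates the equalities at `d + 1` and `d` down to `0`. -/

theorem eq_of_logConcave_of_le_of_eq_top {m : ℕ} {c g : ℕ → ℝ}
    (hg : ∀ i ≤ m + 1, 0 < g i) (hgeom : ∀ i, i + 2 ≤ m + 1 → g i * g (i + 2) = g (i + 1) ^ 2)
    (hc : ∀ i, i + 2 ≤ m + 1 → c i * c (i + 2) ≤ c (i + 1) ^ 2) (hle : ∀ i ≤ m + 1, g i ≤ c i)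
    (htop : c (m + 1) = g (m + 1)) (htop' : c m = g m) :
    ∀ i ≤ m + 1, c i = g i := by
  have hpair : ∀ i ≤ m, c i = g i ∧ c (i + 1) = g (i + 1) := by
    intro i hi
    refine Nat.decreasingInduction (fun k hk ⟨hk₁, hk₂⟩ => ⟨?_, hk₁⟩) ⟨htop', htop⟩ hi
    have hk₂' : 0 < g (k + 2) := hg _ (by omega)
    have : c k * g (k + 2) ≤ g k * g (k + 2) := by
      rw [hgeom k (by omega), ← hk₁, ← hk₂]
      exact hc k (by omega)
    exact le_antisymm (le_of_mul_le_mul_right this hk₂') (hle k (by omega))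
  intro i hi
  rcases Nat.lt_or_ge i (m + 1) with h | h
  · exact (hpair i (by omega)).1
  · rwa [show i = m + 1 by omega]

theorem pow_mul_pow_sub_mul_eq_sq (x y : ℝ) {n i : ℕ} (hi : i + 2 ≤ n) :
    (x ^ i * y ^ (n - i)) * (x ^ (i + 2) * y ^ (n - (i + 2)))
      = (x ^ (i + 1) * y ^ (n - (i + 1))) ^ 2 := by
  obtain ⟨k, rfl⟩ := Nat.exists_eq_add_of_le hi
  rw [show i + 2 + k - i = k + 2 by omega, show i + 2 + k - (i + 2) = k by omega,
    show i + 2 + k - (i + 1) = k + 1 by omega]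
  ring

theorem stmt_10_general (d : ℕ) (a : ℕ → ℝ)
    (hpos : ∀ i ≤ d + 1, 0 < a i)
    (hlc : ∀ i, 1 ≤ i → i ≤ d → a i ^ 2 ≥ a (i-1) * a (i+1))
    (heq : a d ^ (d+1) = a (d+1) ^ d * a 0)
    (hlb : ∀ i ≤ d + 1, a i ^ (d+1) ≥ a (d+1) ^ i * a 0 ^ (d+1-i)) :
    ∀ i ≤ d + 1, a i ^ (d+1) = a (d+1) ^ i * a 0 ^ (d+1-i) := by
  have hA := hpos (d + 1) le_rfl
  have hB := hpos 0 (Nat.zero_le _)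
  refine eq_of_logConcave_of_le_of_eq_top (fun i _ => by positivity)
    (fun i hi => pow_mul_pow_sub_mul_eq_sq _ _ hi) (fun i hi => ?_) hlb
    (by simp) (by simpa using heq)
  have hlc_i : a i * a (i + 2) ≤ a (i + 1) ^ 2 := by simpa using hlc (i + 1) (by omega) (by omega)
  have hnonneg : 0 ≤ a i * a (i + 2) := mul_nonneg (hpos i (by omega)).le (hpos _ hi).le
  rw [← mul_pow, ← pow_mul, pow_mul']
  exact pow_le_pow_left₀ hnonneg hlc_i _

theorem stmt_10 (d : ℕ) (hd : 1 ≤ d) (a : ℕ → ℝ)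
    (hpos : ∀ i ≤ d + 1, 0 < a i)
    (hlc : ∀ i, 1 ≤ i → i ≤ d → a i ^ 2 ≥ a (i-1) * a (i+1))
    (heq : a d ^ (d+1) = a (d+1) ^ d * a 0)
    (hlb : ∀ i ≤ d + 1, a i ^ (d+1) ≥ a (d+1) ^ i * a 0 ^ (d+1-i)) :
    ∀ i ≤ d + 1, a i ^ (d+1) = a (d+1) ^ i * a 0 ^ (d+1-i) :=
  stmt_10_general d a hpos hlc heq hlb
end
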